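/- arXiv:2209.14847 — 3 statements merged into one kernel-verified Lean document; each statement's English description precedes it below -/
import Mathlib

section
/- The only non-negative integer solutions (m, n₂, n₃) with m ≥ 3 of the system n₂ + 3n₃ = m(2m-1) and (3/2)n₂ + (39/8)n₃ = m(10m-6)/3 are m = 3, n₂ = 3, n₃ = 4. -/
/-- Proposition 3.7 (numerical content): the only non-negative integer solutions
`(m, n₂, n₃)` with `m ≥ 3` of `n₂ + 3n₃ = m(2m-1)` and
`(3/2)n₂ + (39/8)n₃ = m(10m-6)/3` are `m = 3`, `n₂ = 3`, `n₃ = 4`. -/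
theorem mk_line_arrangement (m n₂ n₃ : ℕ) :
    (3 ≤ m ∧ (n₂ : ℚ) + 3 * n₃ = m * (2 * m - 1) ∧
      (3 / 2 : ℚ) * n₂ + (39 / 8) * n₃ = (m : ℚ) * (10 * m - 6) / 3) ↔
    (m = 3 ∧ n₂ = 3 ∧ n₃ = 4) := by
  constructor
  · rintro ⟨hm, h1, h2⟩
    have h3 : (3 : ℚ) * n₂ = 9 * m - 2 * m ^ 2 := by nlinarith [h1, h2]
    have h4 : (9 : ℚ) * n₃ = 8 * m ^ 2 - 12 * m := by nlinarith [h1, h2]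
    have hn2 : (0 : ℚ) ≤ (n₂ : ℚ) := by positivity
    have hm4 : m ≤ 4 := by
      by_contra h
      push_neg at h
      have h5 : (5 : ℚ) ≤ (m : ℚ) := by exact_mod_cast h
      nlinarith
    interval_cases m
    · refine ⟨rfl, ?_, ?_⟩
      · have : (3 : ℚ) * n₂ = 9 := by push_cast at h3 ⊢; linarith
        have : 3 * n₂ = 9 := by exact_mod_cast this
        omega
      · have : (9 : ℚ) * n₃ = 36 := by push_cast at h4 ⊢; linarith
        have : 9 * n₃ = 36 := by exact_mod_cast this
        omega
    · exfalso
      have : (9 : ℚ) * n₃ = 80 := by push_cast at h4 ⊢; linarith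
      have : 9 * n₃ = 80 := by exact_mod_cast this
      omega
  · rintro ⟨rfl, rfl, rfl⟩
    norm_num
end

section
/- Let m ≥ 3, and let n₁, n₂ be non-negative integers satisfying 2n₁ + 3n₂ ≤ 2m(2m-1) - 4 and 9n₁ + 16n₂ = 2m(10m - 6). Then n₁ - n₂ ≤ 2m - 20. -/
/-- Proposition 4.2 (numerical content): if `m ≥ 3`, `2n₁ + 3n₂ ≤ 2m(2m-1) - 4`
and `9n₁ + 16n₂ = 2m(10m-6)`, then `n₁ - n₂ ≤ 2m - 20`. -/
theorem mk_dual_curve_bound (m : ℤ) (hm : 3 ≤ m) (n₁ n₂ : ℤ)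
    (h₁ : 0 ≤ n₁) (h₂ : 0 ≤ n₂)
    (hdual : 2 * n₁ + 3 * n₂ ≤ 2 * m * (2 * m - 1) - 4)
    (hMK : 9 * n₁ + 16 * n₂ = 2 * m * (10 * m - 6)) :
    n₁ - n₂ ≤ 2 * m - 20 := by
  nlinarith [hMK, hdual]
end

section
/- Let m ≥ 3 and n₁, n₂ non-negative integers with 9n₁ + 16n₂ = 2m(10m-6), n₁ + 2n₂ ≤ 3m(m-1) + 1, and (m/3)(10m-6) < (n₁ + 2n₂) + (n₁ + n₂). Together with n₁ - n₂ ≤ 2m - 20 (when 2n₁ + 3n₂ ≤ 2m(2m-1) - 4), these imply n₂ > (7m² - 21m)/18 + 10. -/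
/-- Proposition 5.8 (numerical content): for an irreducible MK-curve of degree
`2m` with only `n₁` nodes and `n₂` cusps, the MK condition
`9n₁ + 16n₂ = 2m(10m-6)` together with `n₁ + 2n₂ ≤ 3m(m-1)+1`,
`(m/3)(10m-6) < (n₁+2n₂) + (n₁+n₂)` and `2n₁ + 3n₂ ≤ 2m(2m-1)-4`
imply `n₂ > (7m²-21m)/18 + 10`. -/
theorem mk_n2_lower_bound (m : ℤ) (hm : 3 ≤ m) (n₁ n₂ : ℤ)
    (h₁ : 0 ≤ n₁) (h₂ : 0 ≤ n₂)
    (hMK : 9 * n₁ + 16 * n₂ = 2 * m * (10 * m - 6))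
    (hτ : n₁ + 2 * n₂ ≤ 3 * m * (m - 1) + 1)
    (hs : (m : ℚ) / 3 * (10 * m - 6) < ((n₁ : ℚ) + 2 * n₂) + ((n₁ : ℚ) + n₂))
    (hdual : 2 * n₁ + 3 * n₂ ≤ 2 * m * (2 * m - 1) - 4) :
    (n₂ : ℚ) > (7 * (m : ℚ) ^ 2 - 21 * m) / 18 + 10 := by
  have hm' : (3 : ℚ) ≤ m := by exact_mod_cast hm
  have hMK' : 9 * (n₁ : ℚ) + 16 * n₂ = 2 * m * (10 * m - 6) := by exact_mod_cast hMK
  have hdual' : 2 * (n₁ : ℚ) + 3 * n₂ ≤ 2 * m * (2 * m - 1) - 4 := by exact_mod_cast hdual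
  rw [gt_iff_lt, div_add' _ _ _ (by norm_num), div_lt_iff₀ (by norm_num : (0:ℚ) < 18)]
  nlinarith [sq_nonneg ((m:ℚ) - 3), hMK', hdual', hm']
end
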